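/- arXiv:2405.13919 — 2 statements merged into one kernel-verified Lean document; each statement's English description precedes it below -/
import Mathlib

section
/- If S and B are [0,1]-valued independent random variables, then for each p ∈ [0,1], E[min{(p-S)₊, (B-p)₊}] = ∫₀¹ P[S ≤ p-u] · P[p+u ≤ B] du. -/
open MeasureTheory ProbabilityTheory
open scoped ENNReal

noncomputable def fgft (p s b : ℝ) : ℝ := min (max (p - s) 0) (max (b - p) 0)

lemma fgft_ofReal_eq_volume (p s b : ℝ) (hs : p - s ≤ 1) :
    ENNReal.ofReal (fgft p s b)
      = volume (Set.Iio (min (p - s) (b - p)) ∩ Set.Ioo (0:ℝ) 1) := by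
  set m := min (p - s) (b - p) with hm
  have hm1 : m ≤ 1 := le_trans (min_le_left _ _) hs
  have hfg : fgft p s b = max m 0 := by
    rw [fgft, hm, max_min_distrib_right]
  rw [hfg]
  rcases le_or_gt m 0 with h | h
  · have hset : Set.Iio m ∩ Set.Ioo (0:ℝ) 1 = ∅ := by
      ext u
      simp only [Set.mem_inter_iff, Set.mem_Iio, Set.mem_Ioo, Set.mem_empty_iff_false,
        iff_false]
      rintro ⟨hu, h0, h1⟩
      linarith
    rw [hset, max_eq_right h]
    simp
  · have hset : Set.Iio m ∩ Set.Ioo (0:ℝ) 1 = Set.Ioo 0 m := by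
      ext u
      constructor
      · rintro ⟨h1, h2, _⟩; exact ⟨h2, h1⟩
      · rintro ⟨h1, h2⟩; exact ⟨h2, h1, lt_of_lt_of_le h2 hm1⟩
    rw [hset, Real.volume_Ioo, max_eq_left h.le]
    simp

theorem convolution_lemma_expectation
    {Ω : Type*} [MeasurableSpace Ω] (P : Measure Ω) [IsProbabilityMeasure P]
    (S B : Ω → ℝ) (hSm : Measurable S) (hBm : Measurable B)
    (hS : ∀ ω, S ω ∈ Set.Icc (0:ℝ) 1) (hB : ∀ ω, B ω ∈ Set.Icc (0:ℝ) 1)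
    (hind : IndepFun S B P) (p : ℝ) (hp : p ∈ Set.Icc (0:ℝ) 1) :
    ∫ ω, fgft p (S ω) (B ω) ∂P
      = ∫ u in (0:ℝ)..1,
          (P {ω | S ω ≤ p - u}).toReal * (P {ω | p + u ≤ B ω}).toReal := by
  classical
  -- the joint "layer" set
  set M : Set (Ω × ℝ) := {q | q.2 < min (p - S q.1) (B q.1 - p)} with hMdef
  have hM : MeasurableSet M := by
    apply measurableSet_lt measurable_snd
    exact ((measurable_const.sub (hSm.comp measurable_fst)).min
      ((hBm.comp measurable_fst).sub measurable_const))
  -- pointwise layer-cake identity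
  have hpt : ∀ ω, ENNReal.ofReal (fgft p (S ω) (B ω))
      = ∫⁻ u in Set.Ioo (0:ℝ) 1,
          (Set.Iio (min (p - S ω) (B ω - p))).indicator (1 : ℝ → ℝ≥0∞) u := by
    intro ω
    rw [fgft_ofReal_eq_volume p (S ω) (B ω) (by have := (hS ω).1; have := hp.2; linarith)]
    rw [lintegral_indicator_one measurableSet_Iio, Measure.restrict_apply measurableSet_Iio]
  -- the left side as a double lintegral
  have hLmeas : Measurable fun ω => fgft p (S ω) (B ω) := by
    unfold fgft
    exact ((measurable_const.sub hSm).max measurable_const).min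
      ((hBm.sub measurable_const).max measurable_const)
  have hLnn : ∀ ω, 0 ≤ fgft p (S ω) (B ω) := fun ω =>
    le_min (le_max_right _ _) (le_max_right _ _)
  have step1 : ∫ ω, fgft p (S ω) (B ω) ∂P
      = (∫⁻ ω, ENNReal.ofReal (fgft p (S ω) (B ω)) ∂P).toReal := by
    rw [integral_eq_lintegral_of_nonneg_ae (ae_of_all _ hLnn) hLmeas.aestronglyMeasurable]
  -- Fubini–Tonelli swap
  have hMind : Measurable (Function.uncurry fun (ω : Ω) (u : ℝ) =>
      M.indicator (1 : Ω × ℝ → ℝ≥0∞) (ω, u)) := by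
    have : (Function.uncurry fun (ω : Ω) (u : ℝ) =>
        M.indicator (1 : Ω × ℝ → ℝ≥0∞) (ω, u)) = M.indicator 1 := by
      funext q; cases q; rfl
    rw [this]
    exact measurable_one.indicator hM
  have hswap : ∫⁻ ω, ∫⁻ u in Set.Ioo (0:ℝ) 1,
        M.indicator (1 : Ω × ℝ → ℝ≥0∞) (ω, u) ∂volume ∂P
      = ∫⁻ u in Set.Ioo (0:ℝ) 1,
          ∫⁻ ω, M.indicator (1 : Ω × ℝ → ℝ≥0∞) (ω, u) ∂P ∂volume :=
    lintegral_lintegral_swap hMind.aemeasurable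
  -- the inner section as indicator of Iio
  have hsec : ∀ ω u, M.indicator (1 : Ω × ℝ → ℝ≥0∞) (ω, u)
      = (Set.Iio (min (p - S ω) (B ω - p))).indicator (1 : ℝ → ℝ≥0∞) u := by
    intro ω u
    simp only [Set.indicator_apply, hMdef, Set.mem_setOf_eq, Set.mem_Iio, Pi.one_apply]
  -- inner ω-integral at fixed u, using independence
  have hinner : ∀ u : ℝ, ∫⁻ ω, M.indicator (1 : Ω × ℝ → ℝ≥0∞) (ω, u) ∂P
      = P {ω | S ω < p - u} * P {ω | p + u < B ω} := by
    intro u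
    have hsect : {ω | (ω, u) ∈ M} = S ⁻¹' Set.Iio (p - u) ∩ B ⁻¹' Set.Ioi (p + u) := by
      ext ω
      simp only [hMdef, Set.mem_setOf_eq, lt_min_iff, Set.mem_inter_iff, Set.mem_preimage,
        Set.mem_Iio, Set.mem_Ioi]
      constructor
      · rintro ⟨h1, h2⟩; constructor <;> linarith
      · rintro ⟨h1, h2⟩; constructor <;> linarith
    have hms : MeasurableSet {ω | (ω, u) ∈ M} := by
      rw [hsect]; exact (hSm measurableSet_Iio).inter (hBm measurableSet_Ioi)
    have : (fun ω => M.indicator (1 : Ω × ℝ → ℝ≥0∞) (ω, u))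
        = ({ω | (ω, u) ∈ M}).indicator (1 : Ω → ℝ≥0∞) := by
      funext ω
      simp only [Set.indicator_apply, Set.mem_setOf_eq, Pi.one_apply]
    rw [this, lintegral_indicator_one hms, hsect,
      hind.measure_inter_preimage_eq_mul _ _ measurableSet_Iio measurableSet_Ioi]
    rfl
  -- a.e. equality turning strict inequalities into non-strict ones
  have hScount := MeasureTheory.countable_meas_le_ne_meas_lt P S
  have hBcount := MeasureTheory.countable_meas_le_ne_meas_lt P B
  have hSatom : ∀ t : ℝ, P {ω | t ≤ S ω} = P {ω | t < S ω} →
      P {ω | S ω ≤ t} = P {ω | S ω < t} := by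
    intro t ht
    have hsplit : {ω | t ≤ S ω} = {ω | t < S ω} ∪ {ω | S ω = t} := by
      ext ω
      simp only [Set.mem_setOf_eq, Set.mem_union]
      constructor
      · intro h; rcases lt_or_eq_of_le h with h | h
        · exact Or.inl h
        · exact Or.inr h.symm
      · rintro (h | h); exacts [h.le, h.ge]
    have hdisj : Disjoint {ω | t < S ω} {ω | S ω = t} := by
      rw [Set.disjoint_left]
      intro ω h1 h2
      simp only [Set.mem_setOf_eq] at h1 h2
      exact absurd h2 (ne_of_gt h1)
    have hmeq : P {ω | t ≤ S ω} = P {ω | t < S ω} + P {ω | S ω = t} := by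
      rw [hsplit, measure_union hdisj (hSm (measurableSet_singleton t))]
    have hzero : P {ω | S ω = t} = 0 := by
      have h0 : P {ω | t < S ω} + P {ω | S ω = t} = P {ω | t < S ω} + 0 := by
        rw [add_zero, ← hmeq, ht]
      exact (ENNReal.add_right_inj (measure_ne_top P _)).mp h0
    have hsplit2 : {ω | S ω ≤ t} = {ω | S ω < t} ∪ {ω | S ω = t} := by
      ext ω
      simp only [Set.mem_setOf_eq, Set.mem_union]
      exact le_iff_lt_or_eq
    have hdisj2 : Disjoint {ω | S ω < t} {ω | S ω = t} := by
      rw [Set.disjoint_left]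
      intro ω h1 h2
      simp only [Set.mem_setOf_eq] at h1 h2
      exact absurd h2 (ne_of_lt h1)
    rw [hsplit2, measure_union hdisj2 (hSm (measurableSet_singleton t)), hzero, add_zero]
  -- bad sets of u
  set badS : Set ℝ := {u : ℝ | (p - u) ∈ {t : ℝ | P {ω | t ≤ S ω} ≠ P {ω | t < S ω}}} with hbadS
  set badB : Set ℝ := {u : ℝ | (p + u) ∈ {t : ℝ | P {ω | t ≤ B ω} ≠ P {ω | t < B ω}}} with hbadB
  have hbadScount : badS.Countable := by
    have : badS ⊆ (fun t : ℝ => p - t) '' {t : ℝ | P {ω | t ≤ S ω} ≠ P {ω | t < S ω}} := by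
      intro u hu
      exact ⟨p - u, hu, by ring⟩
    exact (hScount.image _).mono this
  have hbadBcount : badB.Countable := by
    have : badB ⊆ (fun t : ℝ => t - p) '' {t : ℝ | P {ω | t ≤ B ω} ≠ P {ω | t < B ω}} := by
      intro u hu
      exact ⟨p + u, hu, by ring⟩
    exact (hBcount.image _).mono this
  have hbadzero : volume (badS ∪ badB) = 0 :=
    Set.Countable.measure_zero (hbadScount.union hbadBcount) _
  have hae : ∀ᵐ u ∂(volume.restrict (Set.Ioo (0:ℝ) 1)),
      P {ω | S ω < p - u} * P {ω | p + u < B ω}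
        = P {ω | S ω ≤ p - u} * P {ω | p + u ≤ B ω} := by
    apply ae_restrict_of_ae
    rw [ae_iff]
    apply measure_mono_null _ hbadzero
    intro u hu
    simp only [Set.mem_setOf_eq] at hu
    by_contra hnot
    apply hu
    simp only [Set.mem_union, hbadS, hbadB, Set.mem_setOf_eq] at hnot
    push_neg at hnot
    obtain ⟨h1, h2⟩ := hnot
    rw [hSatom _ h1, h2]
  -- measurability of the right-hand integrand
  have hSmeas : Measurable fun u : ℝ => P {ω | S ω ≤ p - u} := by
    apply Antitone.measurable
    intro u v huv
    apply measure_mono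
    intro ω h
    simp only [Set.mem_setOf_eq] at h ⊢
    linarith
  have hBmeas : Measurable fun u : ℝ => P {ω | p + u ≤ B ω} := by
    apply Antitone.measurable
    intro u v huv
    apply measure_mono
    intro ω h
    simp only [Set.mem_setOf_eq] at h ⊢
    linarith
  -- the right-hand side as a lintegral
  have hRHS : ∫ u in (0:ℝ)..1,
        (P {ω | S ω ≤ p - u}).toReal * (P {ω | p + u ≤ B ω}).toReal
      = (∫⁻ u in Set.Ioo (0:ℝ) 1,
          P {ω | S ω ≤ p - u} * P {ω | p + u ≤ B ω} ∂volume).toReal := by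
    rw [intervalIntegral.integral_of_le (zero_le_one)]
    rw [integral_eq_lintegral_of_nonneg_ae
      (ae_of_all _ fun u => mul_nonneg ENNReal.toReal_nonneg ENNReal.toReal_nonneg)
      ((hSmeas.ennreal_toReal.mul hBmeas.ennreal_toReal).aestronglyMeasurable)]
    congr 1
    rw [← setLIntegral_congr (Filter.EventuallyEq.symm MeasureTheory.Ioo_ae_eq_Ioc)]
    apply lintegral_congr
    intro u
    rw [ENNReal.ofReal_mul ENNReal.toReal_nonneg,
      ENNReal.ofReal_toReal (measure_ne_top P _), ENNReal.ofReal_toReal (measure_ne_top P _)]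
  -- put everything together
  rw [step1, hRHS]
  congr 1
  calc ∫⁻ ω, ENNReal.ofReal (fgft p (S ω) (B ω)) ∂P
      = ∫⁻ ω, ∫⁻ u in Set.Ioo (0:ℝ) 1,
          M.indicator (1 : Ω × ℝ → ℝ≥0∞) (ω, u) ∂volume ∂P := by
        apply lintegral_congr
        intro ω
        rw [hpt ω]
        apply lintegral_congr
        intro u
        rw [hsec ω u]
    _ = ∫⁻ u in Set.Ioo (0:ℝ) 1,
          ∫⁻ ω, M.indicator (1 : Ω × ℝ → ℝ≥0∞) (ω, u) ∂P ∂volume := hswap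
    _ = ∫⁻ u in Set.Ioo (0:ℝ) 1,
          P {ω | S ω < p - u} * P {ω | p + u < B ω} ∂volume := by
        apply lintegral_congr
        intro u
        exact hinner u
    _ = ∫⁻ u in Set.Ioo (0:ℝ) 1,
          P {ω | S ω ≤ p - u} * P {ω | p + u ≤ B ω} ∂volume :=
        lintegral_congr_ae hae
end

section
/- Let 0 < h < 1/2, let S be a random variable equal to 0 with probability 1/2 and 1-h with probability 1/2, and let B = 1. Then for every p ∈ [1-h, 1], E[fgft(p,S,B)] ≤ h/2, with equality at p = 1-h, while E[fgft(1/2,S,B)] = 1/4 > h/2. -/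
open MeasureTheory ENNReal

/-- distribution of the seller: 0 w.p. 1/2, 1-h w.p. 1/2 -/
noncomputable def sellerDist (h : ℝ) : Measure ℝ :=
  ((1:ℝ≥0∞)/2) • Measure.dirac 0 + ((1:ℝ≥0∞)/2) • Measure.dirac (1 - h)

lemma fgft_meas (p b : ℝ) : Measurable fun s => fgft p s b := by
  unfold fgft
  exact ((measurable_const.sub measurable_id).max measurable_const).min measurable_const

lemma seller_integral (h p b : ℝ) :
    ∫ s, fgft p s b ∂(sellerDist h) = (fgft p 0 b + fgft p (1 - h) b) / 2 := by
  rw [sellerDist, integral_add_measure, integral_smul_measure, integral_smul_measure,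
    integral_dirac' _ _ (fgft_meas p b).stronglyMeasurable,
    integral_dirac' _ _ (fgft_meas p b).stronglyMeasurable]
  · simp [ENNReal.toReal_div]
    ring
  · exact Integrable.smul_measure
      ((integrable_const (fgft p 0 b)).congr (ae_eq_dirac' (fgft_meas p b)).symm) (by norm_num)
  · exact Integrable.smul_measure
      ((integrable_const (fgft p (1 - h) b)).congr (ae_eq_dirac' (fgft_meas p b)).symm) (by norm_num)

theorem gft_opt_unfair (h : ℝ) (h0 : 0 < h) (h1 : h < 1/2) :
    (∀ p ∈ Set.Icc (1 - h) 1, ∫ s, fgft p s 1 ∂(sellerDist h) ≤ h / 2) ∧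
      (∫ s, fgft (1 - h) s 1 ∂(sellerDist h)) = h / 2 ∧
      (∫ s, fgft (1/2) s 1 ∂(sellerDist h)) = 1/4 ∧
      h / 2 < 1/4 := by
  refine ⟨?_, ?_, ?_, by linarith⟩
  · rintro p ⟨hp1, hp2⟩
    rw [seller_integral]
    unfold fgft
    have h1p : max (1 - p) 0 = 1 - p := max_eq_left (by linarith)
    rw [h1p]
    have e1 : min (max (p - 0) 0) (1 - p) ≤ 1 - p := min_le_right _ _
    have e2 : min (max (p - (1 - h)) 0) (1 - p) ≤ p - (1 - h) :=
      le_trans (min_le_left _ _) (max_le (le_refl _) (by linarith))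
    linarith
  · rw [seller_integral]
    unfold fgft
    have : max ((1 - h) - 0) 0 = 1 - h := by rw [max_eq_left (by linarith : (0:ℝ) ≤ 1 - h - 0)]; ring
    rw [this]
    have : max ((1 - h) - (1 - h)) 0 = 0 := by simp
    rw [this]
    have : max (1 - (1 - h)) 0 = h := by rw [max_eq_left (by linarith : (0:ℝ) ≤ 1 - (1 - h))]; ring
    rw [this]
    rw [min_eq_right (by linarith), min_eq_left h0.le]
    ring
  · rw [seller_integral]
    unfold fgft
    have e1 : min (max ((1:ℝ)/2 - 0) 0) (max (1 - 1/2) 0) = 1/2 := by norm_num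
    have e2 : min (max ((1:ℝ)/2 - (1 - h)) 0) (max (1 - 1/2) 0) = 0 := by
      rw [min_eq_left]
      · exact max_eq_right (by linarith)
      · rw [max_eq_right (by linarith)]; positivity
    rw [e1, e2]; ring
end
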